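/- Let (A, C, W, F) be a filtered model structure on a category 𝒞. Then the class of cofibrations (maps of pro-𝒞 that are essentially levelwise C_a-maps for every a) and the class of weak equivalences (maps that are essentially levelwise W_a-maps for every a) in pro-𝒞 are each closed under retracts. -/

import Mathlib

open CategoryTheory CategoryTheory.Limits Opposite

universe v u

namespace ProPaper

variable (C : Type u) [Category.{v} C]

/-- A pro-object: a diagram indexed by a small cofiltered category. -/
structure ProObj : Type (max u (v + 1)) where
  I : Type v
  [instCat : SmallCategory I]
  [instCof : IsCofiltered I]
  diag : I ⥤ C

attribute [instance] ProObj.instCat ProObj.instCof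

variable {C}

def ProObj.of (I : Type v) [SmallCategory I] [IsCofiltered I] (D : I ⥤ C) : ProObj C :=
  ⟨I, D⟩

/-- The functor `C ⥤ Type` corepresented by a pro-object:
`X ↦ colim_t Hom(X_t, -)`. -/
noncomputable def ProObj.hat (X : ProObj C) : C ⥤ Type v :=
  colimit (X.diag.op ⋙ coyoneda)

/-- The pro-category: `Hom(X, Y) = lim_s colim_t Hom(X_t, Y_s)`, encoded as
natural transformations `hat Y ⟶ hat X`. -/
noncomputable instance : Category (ProObj C) :=
  { Hom := fun X Y => Opposite.op X.hat ⟶ Opposite.op Y.hat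
    id := fun X => 𝟙 (Opposite.op X.hat)
    comp := fun f g => f ≫ g
    id_comp := fun f => Category.id_comp f
    comp_id := fun f => Category.comp_id f
    assoc := fun f g h => Category.assoc f g h }

/-- The pro-map induced by a level map (a natural transformation of diagrams). -/
noncomputable def levelHom {I : Type v} [SmallCategory I] [IsCofiltered I]
    {Xd Yd : I ⥤ C} (η : Xd ⟶ Yd) :
    (ProObj.of I Xd : ProObj C) ⟶ ProObj.of I Yd :=
  Quiver.Hom.op
    ((colimMap (Functor.whiskerRight (NatTrans.op η) coyoneda) :
        colimit (Yd.op ⋙ coyoneda) ⟶ colimit (Xd.op ⋙ coyoneda)) :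
      (ProObj.of I Yd : ProObj C).hat ⟶ (ProObj.of I Xd : ProObj C).hat)

/-- A level map of pro-objects, bundled. -/
structure LevelMap : Type (max u (v + 1)) where
  I : Type v
  [instCat : SmallCategory I]
  [instCof : IsCofiltered I]
  {Xd Yd : I ⥤ C}
  η : Xd ⟶ Yd

attribute [instance] LevelMap.instCat LevelMap.instCof

noncomputable def LevelMap.hom (ℓ : LevelMap (C := C)) :
    (ProObj.of ℓ.I ℓ.Xd : ProObj C) ⟶ ProObj.of ℓ.I ℓ.Yd :=
  levelHom ℓ.η

/-- `f` is an essentially levelwise `M`-map. -/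
def essLevelwise (M : MorphismProperty C) {X Y : ProObj C} (f : X ⟶ Y) : Prop :=
  ∃ ℓ : LevelMap (C := C), (∀ i : ℓ.I, M (ℓ.η.app i)) ∧
    Nonempty (Arrow.mk f ≅ Arrow.mk ℓ.hom)

/-- An object of pro-C belongs to a class `P` of objects essentially levelwise. -/
def essLevelwiseObj (P : C → Prop) (X : ProObj C) : Prop :=
  ∃ Y : ProObj C, (∀ i : Y.I, P (Y.diag.obj i)) ∧ Nonempty (X ≅ Y)


/-- `f` is a retract of `g` (in the arrow category). -/
def IsRetractHom {D : Type*} [Category D] {X Y X' Y' : D}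
    (f : X ⟶ Y) (g : X' ⟶ Y') : Prop :=
  ∃ (i : X ⟶ X') (r : X' ⟶ X) (i' : Y ⟶ Y') (r' : Y' ⟶ Y),
    i ≫ r = 𝟙 X ∧ i' ≫ r' = 𝟙 Y ∧ i ≫ g = f ≫ i' ∧ r ≫ f = g ≫ r'

/-- An object `X` is a retract of `Y`. -/
def IsRetractObj {D : Type*} [Category D] (X Y : D) : Prop :=
  ∃ (i : X ⟶ Y) (r : Y ⟶ X), i ≫ r = 𝟙 X

/-- `inj-M`: the maps with the right lifting property with respect to `M`. -/
def injP {D : Type*} [Category D] (M : MorphismProperty D) : MorphismProperty D :=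
  fun _ _ p => ∀ ⦃A B : D⦄ (i : A ⟶ B), M i → HasLiftingProperty i p

/-- `proj-M`: the maps with the left lifting property with respect to `M`. -/
def projP {D : Type*} [Category D] (M : MorphismProperty D) : MorphismProperty D :=
  fun _ _ i => ∀ ⦃A B : D⦄ (p : A ⟶ B), M p → HasLiftingProperty i p

section FMS

variable {A : Type*} [Preorder A]

/-- The axioms for a filtered model structure `(A, C, W, F)`. -/
structure IsFilteredMS (Cof W Fib : A → MorphismProperty C) : Prop where
  cof_anti : ∀ ⦃a b : A⦄, a ≤ b → Cof b ≤ Cof a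
  weq_anti : ∀ ⦃a b : A⦄, a ≤ b → W b ≤ W a
  fib_mono : ∀ ⦃a b : A⦄, a ≤ b → Fib a ≤ Fib b
  /-- Axiom 4.2: up-to-refinement two-out-of-three. -/
  two_out_of_three : ∀ a : A, ∃ b : A,
    (∀ ⦃X Y Z : C⦄ (f : X ⟶ Y) (g : Y ⟶ Z), W b f → W b g → W a (f ≫ g)) ∧
    (∀ ⦃X Y Z : C⦄ (f : X ⟶ Y) (g : Y ⟶ Z), W b f → W b (f ≫ g) → W a g) ∧
    (∀ ⦃X Y Z : C⦄ (f : X ⟶ Y) (g : Y ⟶ Z), W b g → W b (f ≫ g) → W a f)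
  /-- Axiom 4.3: closure properties. -/
  weq_retract : ∀ (a : A) ⦃X Y X' Y' : C⦄ (f : X ⟶ Y) (g : X' ⟶ Y'),
    IsRetractHom f g → W a g → W a f
  cof_retract : ∀ (a : A) ⦃X Y X' Y' : C⦄ (f : X ⟶ Y) (g : X' ⟶ Y'),
    IsRetractHom f g → Cof a g → Cof a f
  fib_retract : ∀ (a : A) ⦃X Y X' Y' : C⦄ (f : X ⟶ Y) (g : X' ⟶ Y'),
    IsRetractHom f g → Fib a g → Fib a f
  cof_comp : ∀ (a : A) ⦃X Y Z : C⦄ (f : X ⟶ Y) (g : Y ⟶ Z),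
    Cof a f → Cof a g → Cof a (f ≫ g)
  fib_comp : ∀ (a : A) ⦃X Y Z : C⦄ (f : X ⟶ Y) (g : Y ⟶ Z),
    Fib a f → Fib a g → Fib a (f ≫ g)
  cof_cobase : ∀ (a : A) ⦃Z X Y P : C⦄ (f : Z ⟶ X) (g : Z ⟶ Y) (h : X ⟶ P) (k : Y ⟶ P),
    IsPushout f g h k → Cof a f → Cof a k
  fib_base : ∀ (a : A) ⦃P X Y Z : C⦄ (h : P ⟶ X) (k : P ⟶ Y) (f : X ⟶ Z) (g : Y ⟶ Z),
    IsPullback h k f g → Fib a f → Fib a k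
  /-- Axiom 4.4: `inj-C_a ⊆ W_a ∩ F_a` and `proj-F_a ⊆ W_a ∩ C_a`. -/
  injC_le : ∀ a : A, injP (Cof a) ≤ W a ⊓ Fib a
  projF_le : ∀ a : A, projP (Fib a) ≤ W a ⊓ Cof a
  /-- Axiom 4.5: factorizations. -/
  fact_cof : ∀ (a : A) ⦃X Y : C⦄ (f : X ⟶ Y),
    ∃ (Z : C) (i : X ⟶ Z) (p : Z ⟶ Y), Cof a i ∧ injP (Cof a) p ∧ i ≫ p = f
  fact_fib : ∀ (a : A) ⦃X Y : C⦄ (f : X ⟶ Y),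
    ∃ (Z : C) (j : X ⟶ Z) (q : Z ⟶ Y), projP (Fib a) j ∧ Fib a q ∧ j ≫ q = f
  /-- Axiom 4.6: factorization of weak equivalences. -/
  weq_fact : ∀ (a : A) ⦃X Y : C⦄ (f : X ⟶ Y), W a f → ∃ b : A, a ≤ b ∧
    ∃ (Z : C) (i : X ⟶ Z) (p : Z ⟶ Y), projP (Fib b) i ∧ injP (Cof b) p ∧ i ≫ p = f

/-- A proper filtered model structure: Axioms 4.9 and 4.10 in addition. -/
structure IsProperFilteredMS (Cof W Fib : A → MorphismProperty C)
    extends IsFilteredMS Cof W Fib : Prop where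
  weq_cobase : ∀ (a : A) ⦃Z X Y P : C⦄ (f : Z ⟶ X) (g : Z ⟶ Y) (h : X ⟶ P) (k : Y ⟶ P),
    IsPushout f g h k → Cof a f → W a g → W a h
  weq_base : ∀ (a : A) ⦃P X Y Z : C⦄ (h : P ⟶ X) (k : P ⟶ Y) (f : X ⟶ Z) (g : Y ⟶ Z),
    IsPullback h k f g → (∃ b : A, Fib b f) → W a g → W a h

/-- The union `F = ∪ₐ Fₐ`. -/
def unionProp (F : A → MorphismProperty C) : MorphismProperty C :=
  fun _ _ f => ∃ a : A, F a f

/-- The union `inj-C = ∪ₐ inj-Cₐ`. -/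
def injCUnion (Cof : A → MorphismProperty C) : MorphismProperty C :=
  fun _ _ f => ∃ a : A, injP (Cof a) f

end FMS


/-- A pro-object indexed by a (nonempty, upward) directed set `I`;
the diagram is contravariant, i.e. for `s ≤ t` there is a structure map
`X_t ⟶ X_s`. -/
structure DirProObj : Type (max u (v + 1)) where
  I : Type v
  [instPre : Preorder I]
  [instDir : IsDirected I (· ≤ ·)]
  [instNe : Nonempty I]
  diag : Iᵒᵖ ⥤ C

attribute [instance] DirProObj.instPre DirProObj.instDir DirProObj.instNe

/-- The pro-object underlying a directed-set-indexed pro-object. -/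
def DirProObj.pro (X : DirProObj (C := C)) : ProObj C :=
  ProObj.of (X.I)ᵒᵖ X.diag

/-- A level map indexed by a cofinite directed set. -/
structure CofDirLevelMap : Type (max u (v + 1)) where
  I : Type v
  [instPre : Preorder I]
  [instDir : IsDirected I (· ≤ ·)]
  [instNe : Nonempty I]
  cofinite : ∀ t : I, {s : I | s ≤ t}.Finite
  {Xd Yd : Iᵒᵖ ⥤ C}
  η : Xd ⟶ Yd

attribute [instance] CofDirLevelMap.instPre CofDirLevelMap.instDir CofDirLevelMap.instNe

noncomputable def CofDirLevelMap.hom (ℓ : CofDirLevelMap (C := C)) :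
    (ProObj.of (ℓ.I)ᵒᵖ ℓ.Xd : ProObj C) ⟶ ProObj.of (ℓ.I)ᵒᵖ ℓ.Yd :=
  levelHom ℓ.η

section Matching

variable [HasLimits C]

namespace CofDirLevelMap

variable (ℓ : CofDirLevelMap (C := C))

/-- The set of indices strictly below `t`. -/
abbrev Below (t : ℓ.I) : Type v := {s : ℓ.I // s < t}

instance (t : ℓ.I) : Preorder (ℓ.Below t) :=
  Subtype.preorder _

/-- The inclusion of the indices strictly below `t`. -/
def belowIncl (t : ℓ.I) : ℓ.Below t ⥤ ℓ.I :=
  Monotone.functor (f := fun s => s.1) (fun _ _ h => h)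

/-- `lim_{s < t} D_s`. -/
noncomputable def limBelow (D : (ℓ.I)ᵒᵖ ⥤ C) (t : ℓ.I) : C :=
  limit ((ℓ.belowIncl t).op ⋙ D)

/-- The cone over the diagram strictly below `t` with apex `D_t`. -/
noncomputable def belowCone (D : (ℓ.I)ᵒᵖ ⥤ C) (t : ℓ.I) :
    Cone ((ℓ.belowIncl t).op ⋙ D) where
  pt := D.obj (op t)
  π :=
    { app := fun s => D.map (Quiver.Hom.op (homOfLE (le_of_lt s.unop.2)))
      naturality := fun s s' g => by
        dsimp
        rw [Category.id_comp, ← D.map_comp]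
        rfl }

/-- The canonical map `D_t ⟶ lim_{s < t} D_s`. -/
noncomputable def toLimBelow (D : (ℓ.I)ᵒᵖ ⥤ C) (t : ℓ.I) :
    D.obj (op t) ⟶ ℓ.limBelow D t :=
  limit.lift _ (ℓ.belowCone D t)

/-- The target of the relative matching map:
`lim_{s<t} X_s ×_{lim_{s<t} Y_s} Y_t`. -/
noncomputable def matchObj (t : ℓ.I) : C :=
  pullback (limMap (Functor.whiskerLeft (ℓ.belowIncl t).op ℓ.η)) (ℓ.toLimBelow ℓ.Yd t)

/-- The relative matching map `M_t f : X_t ⟶ lim_{s<t} X_s ×_{lim_{s<t} Y_s} Y_t`. -/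
noncomputable def matchingMap (t : ℓ.I) : ℓ.Xd.obj (op t) ⟶ ℓ.matchObj t :=
  pullback.lift (ℓ.toLimBelow ℓ.Xd t) (ℓ.η.app (op t)) (by
    apply limit.hom_ext
    intro j
    simp only [toLimBelow, Category.assoc, limMap_π, limit.lift_π, limit.lift_π_assoc,
      Functor.whiskerLeft_app, belowCone]
    exact ℓ.η.naturality _)

end CofDirLevelMap

/-- `f` is a special `M`-map: it is isomorphic to a cofinite directed level map
all of whose relative matching maps belong to `M`. -/
def specialMap (M : MorphismProperty C) {X Y : ProObj C} (f : X ⟶ Y) : Prop :=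
  ∃ ℓ : CofDirLevelMap (C := C), (∀ t : ℓ.I, M (ℓ.matchingMap t)) ∧
    Nonempty (Arrow.mk f ≅ Arrow.mk ℓ.hom)

end Matching

section ProClasses

variable {A : Type*} [Preorder A]

/-- Cofibrations in `pro-C`: essentially levelwise `C_a`-maps for every `a`. -/
def proCof (Cof : A → MorphismProperty C) : MorphismProperty (ProObj C) :=
  fun _ _ f => ∀ a : A, essLevelwise (Cof a) f

/-- Weak equivalences in `pro-C`: essentially levelwise `W_a`-maps for every `a`. -/
def proWeq (W : A → MorphismProperty C) : MorphismProperty (ProObj C) :=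
  fun _ _ f => ∀ a : A, essLevelwise (W a) f

/-- Fibrations in `pro-C`: retracts of special `F`-maps, `F = ∪ₐ Fₐ`. -/
def proFib [HasLimits C] (Fib : A → MorphismProperty C) : MorphismProperty (ProObj C) :=
  fun _ _ f => ∃ (X' Y' : ProObj C) (g : X' ⟶ Y'),
    specialMap (unionProp Fib) g ∧ IsRetractHom f g

end ProClasses

section ModelStructure

variable {D : Type*} [Category D]

/-- The classes `(Cof, W, Fib)` form a model structure on `D`. -/
structure IsModelStructure (Cof W Fib : MorphismProperty D) : Prop where
  weq_comp : ∀ ⦃X Y Z : D⦄ (f : X ⟶ Y) (g : Y ⟶ Z), W f → W g → W (f ≫ g)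
  weq_cancel_left : ∀ ⦃X Y Z : D⦄ (f : X ⟶ Y) (g : Y ⟶ Z), W f → W (f ≫ g) → W g
  weq_cancel_right : ∀ ⦃X Y Z : D⦄ (f : X ⟶ Y) (g : Y ⟶ Z), W g → W (f ≫ g) → W f
  weq_retract : ∀ ⦃X Y X' Y' : D⦄ (f : X ⟶ Y) (g : X' ⟶ Y'),
    IsRetractHom f g → W g → W f
  cof_retract : ∀ ⦃X Y X' Y' : D⦄ (f : X ⟶ Y) (g : X' ⟶ Y'),
    IsRetractHom f g → Cof g → Cof f
  fib_retract : ∀ ⦃X Y X' Y' : D⦄ (f : X ⟶ Y) (g : X' ⟶ Y'),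
    IsRetractHom f g → Fib g → Fib f
  lift_acyclicCof_fib : ∀ ⦃A B X Y : D⦄ (i : A ⟶ B) (p : X ⟶ Y),
    Cof i → W i → Fib p → HasLiftingProperty i p
  lift_cof_acyclicFib : ∀ ⦃A B X Y : D⦄ (i : A ⟶ B) (p : X ⟶ Y),
    Cof i → Fib p → W p → HasLiftingProperty i p
  fact_acyclicCof_fib : ∀ ⦃X Y : D⦄ (f : X ⟶ Y),
    ∃ (Z : D) (i : X ⟶ Z) (p : Z ⟶ Y), Cof i ∧ W i ∧ Fib p ∧ i ≫ p = f
  fact_cof_acyclicFib : ∀ ⦃X Y : D⦄ (f : X ⟶ Y),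
    ∃ (Z : D) (i : X ⟶ Z) (p : Z ⟶ Y), Cof i ∧ Fib p ∧ W p ∧ i ≫ p = f

/-- The classes `(Cof, W, Fib)` form a proper model structure on `D`. -/
structure IsProperModelStructure (Cof W Fib : MorphismProperty D)
    extends IsModelStructure Cof W Fib : Prop where
  weq_cobase : ∀ ⦃Z X Y P : D⦄ (f : Z ⟶ X) (g : Z ⟶ Y) (h : X ⟶ P) (k : Y ⟶ P),
    IsPushout f g h k → Cof f → W g → W h
  weq_base : ∀ ⦃P X Y Z : D⦄ (h : P ⟶ X) (k : P ⟶ Y) (f : X ⟶ Z) (g : Y ⟶ Z),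
    IsPullback h k f g → Fib f → W g → W h

end ModelStructure

section Constants

/-- The constant pro-object on an object of `C`. -/
def proConst (X : C) : ProObj C :=
  ProObj.of (Discrete PUnit.{v + 1}) ((Functor.const _).obj X)

/-- The constant pro-map on a morphism of `C`. -/
noncomputable def proConstHom {X Y : C} (f : X ⟶ Y) : proConst X ⟶ proConst Y :=
  levelHom ((Functor.const (Discrete PUnit.{v + 1})).map f)

end Constants

section Induced

variable {C' : Type u} [Category.{v} C']

/-- The levelwise action of a functor on pro-objects. -/
def ProObj.map (G : C ⥤ C') (X : ProObj C) : ProObj C' :=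
  ProObj.of X.I (X.diag ⋙ G)

/-- The levelwise action of a functor on level maps. -/
def LevelMap.map (G : C ⥤ C') (ℓ : LevelMap (C := C)) : LevelMap (C := C') :=
  { I := ℓ.I, η := Functor.whiskerRight ℓ.η G }

/-- `Gp : pro-C ⥤ pro-C'` is the functor induced by `G : C ⥤ C'`:
it acts levelwise on pro-objects and on level maps. -/
def IsProInduced (G : C ⥤ C') (Gp : ProObj C ⥤ ProObj C') : Prop :=
  (∀ X : ProObj C, Gp.obj X = ProObj.map G X) ∧
  (∀ ℓ : LevelMap (C := C),
    Nonempty (Arrow.mk (Gp.map ℓ.hom) ≅ Arrow.mk (LevelMap.hom (ℓ.map G))))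

end Induced


section RetractClosure

/-! ### Auxiliary: retracts of essentially levelwise maps.

We show that a retract of an essentially levelwise `M`-map is an essentially
levelwise `M`-map, by re-presenting the retract as a level map over a new
cofiltered index category built from "elements" of the corepresented functors. -/

/-- View a pro-morphism as a map of corepresenting functors (in the reverse direction). -/
def toHat {P Q : ProObj C} (φ : P ⟶ Q) : Q.hat ⟶ P.hat := Opposite.unop φ

/-- Build a pro-morphism from a map of corepresenting functors. -/
def ofHat {P Q : ProObj C} (ψ : Q.hat ⟶ P.hat) : P ⟶ Q := Opposite.op ψ

lemma toHat_comp {P Q R : ProObj C} (φ : P ⟶ Q) (ψ : Q ⟶ R) :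
    toHat (φ ≫ ψ) = toHat ψ ≫ toHat φ := rfl

lemma toHat_id (P : ProObj C) : toHat (𝟙 P) = 𝟙 P.hat := rfl

lemma toHat_ofHat {P Q : ProObj C} (ψ : Q.hat ⟶ P.hat) : toHat (ofHat ψ) = ψ := rfl

lemma ofHat_toHat {P Q : ProObj C} (φ : P ⟶ Q) : ofHat (toHat φ) = φ := rfl

lemma toHat_inj {P Q : ProObj C} {φ φ' : P ⟶ Q} (h : toHat φ = toHat φ') : φ = φ' := by
  rw [← ofHat_toHat φ, ← ofHat_toHat φ', h]

/-- An isomorphism of corepresenting functors yields an isomorphism of pro-objects. -/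
noncomputable def isoOfHat {P Q : ProObj C} (e : Q.hat ≅ P.hat) : P ≅ Q where
  hom := ofHat e.hom
  inv := ofHat e.inv
  hom_inv_id := toHat_inj (by
    rw [toHat_comp, toHat_ofHat, toHat_ofHat, e.inv_hom_id, toHat_id])
  inv_hom_id := toHat_inj (by
    rw [toHat_comp, toHat_ofHat, toHat_ofHat, e.hom_inv_id, toHat_id])

/-- The canonical elements of the corepresented functor of a pro-object. -/
noncomputable def ProObj.el (Z : ProObj C) {c : C} (t : Z.I) (h : Z.diag.obj t ⟶ c) :
    Z.hat.obj c :=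
  (colimit.ι (Z.diag.op ⋙ coyoneda) (op t)).app c h

lemma ProObj.el_map (Z : ProObj C) {c c' : C} (t : Z.I) (h : Z.diag.obj t ⟶ c) (φ : c ⟶ c') :
    Z.hat.map φ (Z.el t h) = Z.el t (h ≫ φ) :=
  (NatTrans.naturality_apply (colimit.ι (Z.diag.op ⋙ coyoneda) (op t)) φ h).symm

lemma ProObj.el_w (Z : ProObj C) {c : C} {s t : Z.I} (a : s ⟶ t) (h : Z.diag.obj t ⟶ c) :
    Z.el t h = Z.el s (Z.diag.map a ≫ h) := by
  show (colimit.ι (Z.diag.op ⋙ coyoneda) (op t)).app c h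
      = (colimit.ι (Z.diag.op ⋙ coyoneda) (op s)).app c (Z.diag.map a ≫ h)
  rw [show colimit.ι (Z.diag.op ⋙ coyoneda) (op t)
      = (Z.diag.op ⋙ coyoneda).map a.op ≫ colimit.ι (Z.diag.op ⋙ coyoneda) (op s) from
    (colimit.w (Z.diag.op ⋙ coyoneda) a.op).symm]
  rfl

lemma ProObj.el_map_eq (Z : ProObj C) {c c' : C} (t : Z.I) (h : Z.diag.obj t ⟶ c)
    (φ : c ⟶ c') {h' : Z.diag.obj t ⟶ c'} (e : h ≫ φ = h') :
    Z.hat.map φ (Z.el t h) = Z.el t h' :=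
  (Z.el_map t h φ).trans (congrArg (fun x => Z.el t x) e)

lemma ProObj.el_w_eq (Z : ProObj C) {c : C} {s t : Z.I} (a : s ⟶ t) (h : Z.diag.obj t ⟶ c)
    {h'' : Z.diag.obj s ⟶ c} (e : Z.diag.map a ≫ h = h'') :
    Z.el t h = Z.el s h'' :=
  (Z.el_w a h).trans (congrArg (fun x => Z.el s x) e)

lemma ProObj.exists_el (Z : ProObj C) {c : C} (x : Z.hat.obj c) :
    ∃ (t : Z.I) (h : Z.diag.obj t ⟶ c), x = Z.el t h := by
  obtain ⟨j, y, hy⟩ := Types.jointly_surjective'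
    ((colimitObjIsoColimitCompEvaluation (Z.diag.op ⋙ coyoneda) c).hom x)
  refine ⟨j.unop, y, ?_⟩
  have h3 : (colimitObjIsoColimitCompEvaluation (Z.diag.op ⋙ coyoneda) c).inv
      (colimit.ι ((Z.diag.op ⋙ coyoneda) ⋙ (evaluation C (Type v)).obj c) j y) = Z.el (unop j) y :=
    types_congr_hom (colimitObjIsoColimitCompEvaluation_ι_inv (Z.diag.op ⋙ coyoneda) j c) y
  have h4 := Iso.hom_inv_id_apply (colimitObjIsoColimitCompEvaluation (Z.diag.op ⋙ coyoneda) c) x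
  exact h4.symm.trans ((congrArg (fun z => (colimitObjIsoColimitCompEvaluation
    (Z.diag.op ⋙ coyoneda) c).inv z) hy.symm).trans h3)

lemma ProObj.el_eq_el (Z : ProObj C) {c : C} {t s : Z.I} {h : Z.diag.obj t ⟶ c}
    {h' : Z.diag.obj s ⟶ c} (H : Z.el t h = Z.el s h') :
    ∃ (w : Z.I) (a : w ⟶ t) (b : w ⟶ s), Z.diag.map a ≫ h = Z.diag.map b ≫ h' := by
  have h1 := congrArg (colimitObjIsoColimitCompEvaluation (Z.diag.op ⋙ coyoneda) c).hom H
  have e1 := types_congr_hom (colimitObjIsoColimitCompEvaluation_ι_app_hom (Z.diag.op ⋙ coyoneda)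
    (op t) c) h
  have e2 := types_congr_hom (colimitObjIsoColimitCompEvaluation_ι_app_hom (Z.diag.op ⋙ coyoneda)
    (op s) c) h'
  rw [show (colimitObjIsoColimitCompEvaluation (Z.diag.op ⋙ coyoneda) c).hom (Z.el t h)
      = colimit.ι ((Z.diag.op ⋙ coyoneda) ⋙ (evaluation C (Type v)).obj c) (op t) h from e1,
    show (colimitObjIsoColimitCompEvaluation (Z.diag.op ⋙ coyoneda) c).hom (Z.el s h')
      = colimit.ι ((Z.diag.op ⋙ coyoneda) ⋙ (evaluation C (Type v)).obj c) (op s) h' from e2]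
      at h1
  obtain ⟨k, a, b, hab⟩ := (Types.FilteredColimit.colimit_eq_iff
    ((Z.diag.op ⋙ coyoneda) ⋙ (evaluation C (Type v)).obj c)).1 h1
  exact ⟨k.unop, a.unop, b.unop, hab⟩

lemma ProObj.el_eq_el_same (Z : ProObj C) {c : C} {s : Z.I} {h h' : Z.diag.obj s ⟶ c}
    (H : Z.el s h = Z.el s h') :
    ∃ (w : Z.I) (dd : w ⟶ s), Z.diag.map dd ≫ h = Z.diag.map dd ≫ h' := by
  obtain ⟨w, a, b, hab⟩ := Z.el_eq_el H
  refine ⟨IsCofiltered.eq a b, IsCofiltered.eqHom a b ≫ a, ?_⟩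
  conv_rhs => rw [IsCofiltered.eq_condition a b]
  rw [Functor.map_comp, Functor.map_comp, Category.assoc, Category.assoc, hab]

lemma toHat_levelHom_el {I : Type v} [SmallCategory I] [IsCofiltered I]
    {Xd Yd : I ⥤ C} (η : Xd ⟶ Yd) {c : C} (t : I) (h : Yd.obj t ⟶ c) :
    (toHat (levelHom η)).app c ((ProObj.of I Yd : ProObj C).el t h)
      = (ProObj.of I Xd : ProObj C).el t (η.app t ≫ h) := by
  show ((colimit.ι (Yd.op ⋙ coyoneda) (op t)) ≫
      colimMap (Functor.whiskerRight (NatTrans.op η) coyoneda)).app c h = _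
  rw [ι_colimMap]
  rfl

end RetractClosure


section RetractMain

/-- The data of a retract of a level map. -/
structure RD : Type (max u (v + 1)) where
  ℓ : LevelMap (C := C)
  X : ProObj C
  Y : ProObj C
  f : X ⟶ Y
  i : X ⟶ ProObj.of ℓ.I ℓ.Xd
  r : ProObj.of ℓ.I ℓ.Xd ⟶ X
  i' : Y ⟶ ProObj.of ℓ.I ℓ.Yd
  r' : ProObj.of ℓ.I ℓ.Yd ⟶ Y
  hir : i ≫ r = 𝟙 X
  hir' : i' ≫ r' = 𝟙 Y
  hsq1 : i ≫ ℓ.hom = f ≫ i'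
  hsq2 : r ≫ f = ℓ.hom ≫ r'

namespace RD

variable (d : RD (C := C))

/-- The source of the level map, as a pro-object. -/
abbrev Xp : ProObj C := ⟨d.ℓ.I, d.ℓ.Xd⟩

/-- The target of the level map, as a pro-object. -/
abbrev Yp : ProObj C := ⟨d.ℓ.I, d.ℓ.Yd⟩

noncomputable abbrev fh : d.Y.hat ⟶ d.X.hat := toHat d.f
noncomputable abbrev ih : d.Xp.hat ⟶ d.X.hat := toHat d.i
noncomputable abbrev rh : d.X.hat ⟶ d.Xp.hat := toHat d.r
noncomputable abbrev ih' : d.Yp.hat ⟶ d.Y.hat := toHat d.i'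
noncomputable abbrev rh' : d.Y.hat ⟶ d.Yp.hat := toHat d.r'
noncomputable abbrev gh : d.Yp.hat ⟶ d.Xp.hat := toHat d.ℓ.hom

lemma retX : d.rh ≫ d.ih = 𝟙 d.X.hat := by
  have := congrArg toHat d.hir
  rwa [toHat_comp, toHat_id] at this

lemma retY : d.rh' ≫ d.ih' = 𝟙 d.Y.hat := by
  have := congrArg toHat d.hir'
  rwa [toHat_comp, toHat_id] at this

lemma sq1 : d.gh ≫ d.ih = d.ih' ≫ d.fh := by
  have := congrArg toHat d.hsq1
  rwa [toHat_comp, toHat_comp] at this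

lemma sq2 : d.fh ≫ d.rh = d.rh' ≫ d.gh := by
  have := congrArg toHat d.hsq2
  rwa [toHat_comp, toHat_comp] at this

lemma gh_el {c : C} (t : d.ℓ.I) (h : d.ℓ.Yd.obj t ⟶ c) :
    d.gh.app c (d.Yp.el t h) = d.Xp.el t (d.ℓ.η.app t ≫ h) :=
  toHat_levelHom_el d.ℓ.η t h

lemma elX_w {c : C} {s t : d.ℓ.I} (a : s ⟶ t) (h : d.ℓ.Xd.obj t ⟶ c) :
    d.Xp.el t h = d.Xp.el s (d.ℓ.Xd.map a ≫ h) := d.Xp.el_w a h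

lemma elY_w {c : C} {s t : d.ℓ.I} (a : s ⟶ t) (h : d.ℓ.Yd.obj t ⟶ c) :
    d.Yp.el t h = d.Yp.el s (d.ℓ.Yd.map a ≫ h) := d.Yp.el_w a h

lemma elX_one_w {s t : d.ℓ.I} (a : s ⟶ t) :
    d.Xp.el t (𝟙 (d.ℓ.Xd.obj t)) = d.Xp.el s (d.ℓ.Xd.map a) :=
  d.Xp.el_w_eq a _ (Category.comp_id _)

lemma elY_one_w {s t : d.ℓ.I} (a : s ⟶ t) :
    d.Yp.el t (𝟙 (d.ℓ.Yd.obj t)) = d.Yp.el s (d.ℓ.Yd.map a) :=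
  d.Yp.el_w_eq a _ (Category.comp_id _)

lemma existsX_el {c : C} (x : d.Xp.hat.obj c) :
    ∃ (t : d.ℓ.I) (h : d.ℓ.Xd.obj t ⟶ c), x = d.Xp.el t h := d.Xp.exists_el x

lemma existsY_el {c : C} (x : d.Yp.hat.obj c) :
    ∃ (t : d.ℓ.I) (h : d.ℓ.Yd.obj t ⟶ c), x = d.Yp.el t h := d.Yp.exists_el x

lemma elX_eq_same {c : C} {s : d.ℓ.I} {h h' : d.ℓ.Xd.obj s ⟶ c}
    (H : d.Xp.el s h = d.Xp.el s h') :
    ∃ (w : d.ℓ.I) (dd : w ⟶ s), d.ℓ.Xd.map dd ≫ h = d.ℓ.Xd.map dd ≫ h' :=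
  d.Xp.el_eq_el_same H

lemma elY_eq_same {c : C} {s : d.ℓ.I} {h h' : d.ℓ.Yd.obj s ⟶ c}
    (H : d.Yp.el s h = d.Yp.el s h') :
    ∃ (w : d.ℓ.I) (dd : w ⟶ s), d.ℓ.Yd.map dd ≫ h = d.ℓ.Yd.map dd ≫ h' :=
  d.Yp.el_eq_el_same H

/-- The index category of the new level presentation of the retract. -/
structure Idx : Type v where
  t : d.ℓ.I
  ξ : d.X.hat.obj (d.ℓ.Xd.obj t)
  υ : d.Y.hat.obj (d.ℓ.Yd.obj t)
  compat : d.fh.app _ υ = d.X.hat.map (d.ℓ.η.app t) ξ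

/-- Morphisms in the index category. -/
@[ext] structure IdxHom (k k' : Idx d) : Type v where
  u : d.ℓ.Xd.obj k'.t ⟶ d.ℓ.Xd.obj k.t
  w : d.ℓ.Yd.obj k'.t ⟶ d.ℓ.Yd.obj k.t
  hnat : u ≫ d.ℓ.η.app k.t = d.ℓ.η.app k'.t ≫ w
  hξ : k.ξ = d.X.hat.map u k'.ξ
  hυ : k.υ = d.Y.hat.map w k'.υ

instance : Category (Idx d) where
  Hom := IdxHom d
  id k := ⟨𝟙 _, 𝟙 _, by simp, by simp, by simp⟩
  comp {a b c} m n :=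
    ⟨n.u ≫ m.u, n.w ≫ m.w,
      by rw [Category.assoc, m.hnat, ← Category.assoc, n.hnat, Category.assoc],
      by rw [m.hξ, n.hξ, FunctorToTypes.map_comp_apply],
      by rw [m.hυ, n.hυ, FunctorToTypes.map_comp_apply]⟩
  id_comp m := by apply IdxHom.ext <;> simp
  comp_id m := by apply IdxHom.ext <;> simp
  assoc m n o := by apply IdxHom.ext <;> simp

lemma comp_u {a b c : Idx d} (m : a ⟶ b) (n : b ⟶ c) : (m ≫ n).u = n.u ≫ m.u := rfl

lemma comp_w {a b c : Idx d} (m : a ⟶ b) (n : b ⟶ c) : (m ≫ n).w = n.w ≫ m.w := rfl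

/-- The canonical objects of the index category. -/
noncomputable def can (t : d.ℓ.I) : Idx d where
  t := t
  ξ := d.ih.app _ (d.Xp.el t (𝟙 (d.ℓ.Xd.obj t)))
  υ := d.ih'.app _ (d.Yp.el t (𝟙 (d.ℓ.Yd.obj t)))
  compat := by
    have e1 : d.gh.app _ (d.Yp.el t (𝟙 (d.ℓ.Yd.obj t))) = d.Xp.el t (d.ℓ.η.app t) :=
      (d.gh_el t _).trans (congrArg (fun x => d.Xp.el t x) (Category.comp_id _))
    have e2 : d.X.hat.map (d.ℓ.η.app t) (d.ih.app _ (d.Xp.el t (𝟙 (d.ℓ.Xd.obj t))))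
        = d.ih.app _ (d.Xp.el t (d.ℓ.η.app t)) := by
      have h1 : d.Xp.hat.map (d.ℓ.η.app t) (d.Xp.el t (𝟙 (d.ℓ.Xd.obj t)))
          = d.Xp.el t (d.ℓ.η.app t) := d.Xp.el_map_eq t _ _ (Category.id_comp _)
      have h2 := NatTrans.naturality_apply d.ih (d.ℓ.η.app t)
        (d.Xp.el t (𝟙 (d.ℓ.Xd.obj t)))
      rw [h1] at h2
      exact h2.symm
    calc d.fh.app _ (d.ih'.app _ (d.Yp.el t (𝟙 (d.ℓ.Yd.obj t))))
        = (d.gh ≫ d.ih).app _ (d.Yp.el t (𝟙 (d.ℓ.Yd.obj t))) := by rw [d.sq1]; rfl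
      _ = d.ih.app _ (d.gh.app _ (d.Yp.el t (𝟙 (d.ℓ.Yd.obj t)))) := rfl
      _ = d.ih.app _ (d.Xp.el t (d.ℓ.η.app t)) := by rw [e1]
      _ = d.X.hat.map (d.ℓ.η.app t) (d.ih.app _ (d.Xp.el t (𝟙 (d.ℓ.Xd.obj t)))) := e2.symm

/-- The structural morphisms between canonical objects. -/
noncomputable def canHom {s t : d.ℓ.I} (a : s ⟶ t) : d.can t ⟶ d.can s where
  u := d.ℓ.Xd.map a
  w := d.ℓ.Yd.map a
  hnat := d.ℓ.η.naturality a
  hξ := by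
    show d.ih.app _ (d.Xp.el t (𝟙 (d.ℓ.Xd.obj t)))
        = d.X.hat.map (d.ℓ.Xd.map a) (d.ih.app _ (d.Xp.el s (𝟙 (d.ℓ.Xd.obj s))))
    have h1 : d.Xp.hat.map (d.ℓ.Xd.map a) (d.Xp.el s (𝟙 (d.ℓ.Xd.obj s)))
        = d.Xp.el s (d.ℓ.Xd.map a) := d.Xp.el_map_eq s _ _ (Category.id_comp _)
    have h2 := NatTrans.naturality_apply d.ih (d.ℓ.Xd.map a)
      (d.Xp.el s (𝟙 (d.ℓ.Xd.obj s)))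
    rw [h1] at h2
    rw [← h2, d.elX_one_w a]
  hυ := by
    show d.ih'.app _ (d.Yp.el t (𝟙 (d.ℓ.Yd.obj t)))
        = d.Y.hat.map (d.ℓ.Yd.map a) (d.ih'.app _ (d.Yp.el s (𝟙 (d.ℓ.Yd.obj s))))
    have h1 : d.Yp.hat.map (d.ℓ.Yd.map a) (d.Yp.el s (𝟙 (d.ℓ.Yd.obj s)))
        = d.Yp.el s (d.ℓ.Yd.map a) := d.Yp.el_map_eq s _ _ (Category.id_comp _)
    have h2 := NatTrans.naturality_apply d.ih' (d.ℓ.Yd.map a)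
      (d.Yp.el s (𝟙 (d.ℓ.Yd.obj s)))
    rw [h1] at h2
    rw [← h2, d.elY_one_w a]

/-- Every object of the index category refines into a canonical one, compatibly
with the retraction. -/
lemma exists_hom_to_can (k : Idx d) :
    ∃ (s : d.ℓ.I) (m : k ⟶ d.can s),
      d.Xp.el s m.u = d.rh.app _ k.ξ ∧ d.Yp.el s m.w = d.rh'.app _ k.υ := by
  obtain ⟨s₀, u₀, hu₀⟩ := d.existsX_el (d.rh.app _ k.ξ)
  obtain ⟨s₁, w₁, hw₁⟩ := d.existsY_el (d.rh'.app _ k.υ)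
  set u₂ := d.ℓ.Xd.map (IsCofiltered.minToLeft s₀ s₁) ≫ u₀ with hu₂d
  set w₂ := d.ℓ.Yd.map (IsCofiltered.minToRight s₀ s₁) ≫ w₁ with hw₂d
  have hu₂ : d.Xp.el (IsCofiltered.min s₀ s₁) u₂ = d.rh.app _ k.ξ := by
    rw [hu₂d, ← d.elX_w (IsCofiltered.minToLeft s₀ s₁) u₀]; exact hu₀.symm
  have hw₂ : d.Yp.el (IsCofiltered.min s₀ s₁) w₂ = d.rh'.app _ k.υ := by
    rw [hw₂d, ← d.elY_w (IsCofiltered.minToRight s₀ s₁) w₁]; exact hw₁.symm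
  have key : d.Xp.el (IsCofiltered.min s₀ s₁) (u₂ ≫ d.ℓ.η.app k.t)
      = d.Xp.el (IsCofiltered.min s₀ s₁) (d.ℓ.η.app (IsCofiltered.min s₀ s₁) ≫ w₂) := by
    calc d.Xp.el (IsCofiltered.min s₀ s₁) (u₂ ≫ d.ℓ.η.app k.t)
        = d.Xp.hat.map (d.ℓ.η.app k.t) (d.Xp.el (IsCofiltered.min s₀ s₁) u₂) := by
          rw [ProObj.el_map]
      _ = d.Xp.hat.map (d.ℓ.η.app k.t) (d.rh.app _ k.ξ) := by rw [hu₂]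
      _ = d.rh.app _ (d.X.hat.map (d.ℓ.η.app k.t) k.ξ) :=
          (NatTrans.naturality_apply d.rh _ _).symm
      _ = d.rh.app _ (d.fh.app _ k.υ) := by rw [← k.compat]
      _ = (d.fh ≫ d.rh).app _ k.υ := rfl
      _ = (d.rh' ≫ d.gh).app _ k.υ := by rw [d.sq2]
      _ = d.gh.app _ (d.rh'.app _ k.υ) := rfl
      _ = d.gh.app _ (d.Yp.el (IsCofiltered.min s₀ s₁) w₂) := by rw [hw₂]
      _ = d.Xp.el (IsCofiltered.min s₀ s₁) (d.ℓ.η.app (IsCofiltered.min s₀ s₁) ≫ w₂) :=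
          d.gh_el _ w₂
  obtain ⟨s₃, dd, hdd⟩ := d.elX_eq_same key
  have hels : d.Xp.el s₃ (d.ℓ.Xd.map dd ≫ u₂) = d.rh.app _ k.ξ := by
    rw [← d.elX_w dd u₂]; exact hu₂
  have helw : d.Yp.el s₃ (d.ℓ.Yd.map dd ≫ w₂) = d.rh'.app _ k.υ := by
    rw [← d.elY_w dd w₂]; exact hw₂
  refine ⟨s₃, ⟨d.ℓ.Xd.map dd ≫ u₂, d.ℓ.Yd.map dd ≫ w₂, ?_, ?_, ?_⟩, hels, helw⟩
  · erw [Category.assoc, hdd, ← Category.assoc, d.ℓ.η.naturality dd, Category.assoc]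
    rfl
  · show k.ξ = d.X.hat.map (d.ℓ.Xd.map dd ≫ u₂) (d.ih.app _ (d.Xp.el s₃ (𝟙 (d.ℓ.Xd.obj s₃))))
    have h1 : d.Xp.hat.map (d.ℓ.Xd.map dd ≫ u₂) (d.Xp.el s₃ (𝟙 (d.ℓ.Xd.obj s₃)))
        = d.Xp.el s₃ (d.ℓ.Xd.map dd ≫ u₂) := d.Xp.el_map_eq s₃ _ _ (Category.id_comp _)
    have h2 := NatTrans.naturality_apply d.ih (d.ℓ.Xd.map dd ≫ u₂)
      (d.Xp.el s₃ (𝟙 (d.ℓ.Xd.obj s₃)))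
    rw [h1, hels] at h2
    rw [← h2]
    exact types_congr_hom (congrArg (fun σ => NatTrans.app σ _) d.retX.symm) k.ξ
  · show k.υ = d.Y.hat.map (d.ℓ.Yd.map dd ≫ w₂) (d.ih'.app _ (d.Yp.el s₃ (𝟙 (d.ℓ.Yd.obj s₃))))
    have h1 : d.Yp.hat.map (d.ℓ.Yd.map dd ≫ w₂) (d.Yp.el s₃ (𝟙 (d.ℓ.Yd.obj s₃)))
        = d.Yp.el s₃ (d.ℓ.Yd.map dd ≫ w₂) := d.Yp.el_map_eq s₃ _ _ (Category.id_comp _)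
    have h2 := NatTrans.naturality_apply d.ih' (d.ℓ.Yd.map dd ≫ w₂)
      (d.Yp.el s₃ (𝟙 (d.ℓ.Yd.obj s₃)))
    rw [h1, helw] at h2
    rw [← h2]
    exact types_congr_hom (congrArg (fun σ => NatTrans.app σ _) d.retY.symm) k.υ

instance : Nonempty (Idx d) := ⟨d.can (Nonempty.some IsCofiltered.nonempty)⟩

instance : IsFiltered (Idx d) := by
  have hobj : ∀ k k' : Idx d, ∃ (z : Idx d) (_ : k ⟶ z) (_ : k' ⟶ z), True := by
    intro k k'
    obtain ⟨s, m, -, -⟩ := d.exists_hom_to_can k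
    obtain ⟨s', m', -, -⟩ := d.exists_hom_to_can k'
    exact ⟨d.can (IsCofiltered.min s s'),
      m ≫ d.canHom (IsCofiltered.minToLeft s s'),
      m' ≫ d.canHom (IsCofiltered.minToRight s s'), trivial⟩
  have hmap : ∀ (k k' : Idx d) (m₁ m₂ : k ⟶ k'), ∃ (z : Idx d) (n : k' ⟶ z),
      m₁ ≫ n = m₂ ≫ n := by
    intro k k' m₁ m₂
    obtain ⟨s, n₀, hnu, hnw⟩ := d.exists_hom_to_can k'
    have cX : ∀ m : k ⟶ k', d.Xp.el s (n₀.u ≫ m.u) = d.rh.app _ k.ξ := by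
      intro m
      calc d.Xp.el s (n₀.u ≫ m.u) = d.Xp.hat.map m.u (d.Xp.el s n₀.u) := by
            erw [ProObj.el_map]
        _ = d.Xp.hat.map m.u (d.rh.app _ k'.ξ) := by rw [hnu]
        _ = d.rh.app _ (d.X.hat.map m.u k'.ξ) :=
            (NatTrans.naturality_apply d.rh _ _).symm
        _ = d.rh.app _ k.ξ := by rw [← m.hξ]
    have cY : ∀ m : k ⟶ k', d.Yp.el s (n₀.w ≫ m.w) = d.rh'.app _ k.υ := by
      intro m
      calc d.Yp.el s (n₀.w ≫ m.w) = d.Yp.hat.map m.w (d.Yp.el s n₀.w) := by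
            erw [ProObj.el_map]
        _ = d.Yp.hat.map m.w (d.rh'.app _ k'.υ) := by rw [hnw]
        _ = d.rh'.app _ (d.Y.hat.map m.w k'.υ) :=
            (NatTrans.naturality_apply d.rh' _ _).symm
        _ = d.rh'.app _ k.υ := by rw [← m.hυ]
    obtain ⟨s₄, dX, hdX⟩ := d.elX_eq_same ((cX m₁).trans (cX m₂).symm)
    obtain ⟨s₅, dY, hdY⟩ := d.elY_eq_same ((cY m₁).trans (cY m₂).symm)
    have main : ∀ (z : d.ℓ.I) (e : z ⟶ s),
        (d.ℓ.Xd.map e ≫ n₀.u ≫ m₁.u = d.ℓ.Xd.map e ≫ n₀.u ≫ m₂.u) →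
        (d.ℓ.Yd.map e ≫ n₀.w ≫ m₁.w = d.ℓ.Yd.map e ≫ n₀.w ≫ m₂.w) →
        m₁ ≫ (n₀ ≫ d.canHom e) = m₂ ≫ (n₀ ≫ d.canHom e) := by
      intro z e hX hY
      apply IdxHom.ext
      · show (n₀ ≫ d.canHom e).u ≫ m₁.u = (n₀ ≫ d.canHom e).u ≫ m₂.u
        show (d.ℓ.Xd.map e ≫ n₀.u) ≫ m₁.u = (d.ℓ.Xd.map e ≫ n₀.u) ≫ m₂.u
        exact (Category.assoc _ _ _).trans (hX.trans (Category.assoc _ _ _).symm)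
      · show (n₀ ≫ d.canHom e).w ≫ m₁.w = (n₀ ≫ d.canHom e).w ≫ m₂.w
        show (d.ℓ.Yd.map e ≫ n₀.w) ≫ m₁.w = (d.ℓ.Yd.map e ≫ n₀.w) ≫ m₂.w
        exact (Category.assoc _ _ _).trans (hY.trans (Category.assoc _ _ _).symm)
    refine ⟨_, n₀ ≫ d.canHom
      (IsCofiltered.eqHom (IsCofiltered.minToLeft s₄ s₅ ≫ dX)
        (IsCofiltered.minToRight s₄ s₅ ≫ dY) ≫ (IsCofiltered.minToLeft s₄ s₅ ≫ dX)), ?_⟩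
    apply main
    · have h := congrArg (fun q => d.ℓ.Xd.map
        (IsCofiltered.eqHom (IsCofiltered.minToLeft s₄ s₅ ≫ dX)
          (IsCofiltered.minToRight s₄ s₅ ≫ dY) ≫ IsCofiltered.minToLeft s₄ s₅) ≫ q) hdX
      simpa only [Functor.map_comp, Category.assoc] using h
    · rw [IsCofiltered.eq_condition]
      have h := congrArg (fun q => d.ℓ.Yd.map
        (IsCofiltered.eqHom (IsCofiltered.minToLeft s₄ s₅ ≫ dX)
          (IsCofiltered.minToRight s₄ s₅ ≫ dY) ≫ IsCofiltered.minToRight s₄ s₅) ≫ q) hdY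
      simpa only [Functor.map_comp, Category.assoc] using h
  have : IsFilteredOrEmpty (Idx d) := ⟨hobj, fun {k k'} m₁ m₂ => hmap k k' m₁ m₂⟩
  constructor

/-- The new level diagram (source side). -/
def IXd : (Idx d)ᵒᵖ ⥤ C where
  obj a := d.ℓ.Xd.obj a.unop.t
  map m := m.unop.u
  map_id _ := rfl
  map_comp _ _ := rfl

/-- The new level diagram (target side). -/
def IYd : (Idx d)ᵒᵖ ⥤ C where
  obj a := d.ℓ.Yd.obj a.unop.t
  map m := m.unop.w
  map_id _ := rfl
  map_comp _ _ := rfl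

/-- The new level map. -/
def Iη : d.IXd ⟶ d.IYd where
  app a := d.ℓ.η.app a.unop.t
  naturality _ _ m := m.unop.hnat

/-- The new level presentation. -/
noncomputable def newLevel : LevelMap (C := C) where
  I := (Idx d)ᵒᵖ
  η := d.Iη

/-- The new pro-object (source side). -/
abbrev NX : ProObj C := ⟨(Idx d)ᵒᵖ, d.IXd⟩

/-- The new pro-object (target side). -/
abbrev NY : ProObj C := ⟨(Idx d)ᵒᵖ, d.IYd⟩

lemma elNX_w {b : (Idx d)ᵒᵖ} {k' : Idx d} (mm : b.unop ⟶ k') {c : C}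
    (h : d.ℓ.Xd.obj b.unop.t ⟶ c) :
    (d.NX).el b h = (d.NX).el (op k') (mm.u ≫ h) :=
  (d.NX).el_w_eq (show op k' ⟶ b from Quiver.Hom.op mm) h rfl

lemma elNY_w {b : (Idx d)ᵒᵖ} {k' : Idx d} (mm : b.unop ⟶ k') {c : C}
    (h : d.ℓ.Yd.obj b.unop.t ⟶ c) :
    (d.NY).el b h = (d.NY).el (op k') (mm.w ≫ h) :=
  (d.NY).el_w_eq (show op k' ⟶ b from Quiver.Hom.op mm) h rfl

/-- The cocone over the new diagram with apex the corepresented functor of `X`. -/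
noncomputable def coconeX : Cocone (d.IXd.op ⋙ coyoneda) where
  pt := d.X.hat
  ι :=
    { app := fun j =>
        { app := fun c => TypeCat.ofHom fun h => d.X.hat.map h j.unop.unop.ξ
          naturality := fun c c' φ => by
            refine ConcreteCategory.hom_ext _ _ fun h => ?_
            exact FunctorToTypes.map_comp_apply d.X.hat h φ j.unop.unop.ξ }
      naturality := fun j j' φ => by
        apply NatTrans.ext
        funext c
        refine ConcreteCategory.hom_ext _ _ fun (h : d.ℓ.Xd.obj j.unop.unop.t ⟶ c) => ?_
        show d.X.hat.map (φ.unop.unop.u ≫ h) j'.unop.unop.ξ = d.X.hat.map h j.unop.unop.ξ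
        rw [FunctorToTypes.map_comp_apply, ← φ.unop.unop.hξ] }

/-- The cocone over the new diagram with apex the corepresented functor of `Y`. -/
noncomputable def coconeY : Cocone (d.IYd.op ⋙ coyoneda) where
  pt := d.Y.hat
  ι :=
    { app := fun j =>
        { app := fun c => TypeCat.ofHom fun h => d.Y.hat.map h j.unop.unop.υ
          naturality := fun c c' φ => by
            refine ConcreteCategory.hom_ext _ _ fun h => ?_
            exact FunctorToTypes.map_comp_apply d.Y.hat h φ j.unop.unop.υ }
      naturality := fun j j' φ => by
        apply NatTrans.ext
        funext c
        refine ConcreteCategory.hom_ext _ _ fun (h : d.ℓ.Yd.obj j.unop.unop.t ⟶ c) => ?_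
        show d.Y.hat.map (φ.unop.unop.w ≫ h) j'.unop.unop.υ = d.Y.hat.map h j.unop.unop.υ
        rw [FunctorToTypes.map_comp_apply, ← φ.unop.unop.hυ] }

noncomputable def descX : (d.NX).hat ⟶ d.X.hat :=
  colimit.desc (d.IXd.op ⋙ coyoneda) d.coconeX

noncomputable def descY : (d.NY).hat ⟶ d.Y.hat :=
  colimit.desc (d.IYd.op ⋙ coyoneda) d.coconeY

lemma descX_el {c : C} (a : (Idx d)ᵒᵖ) (h : d.ℓ.Xd.obj a.unop.t ⟶ c) :
    (d.descX).app c ((d.NX).el a h) = d.X.hat.map h a.unop.ξ := by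
  show ((colimit.ι (d.IXd.op ⋙ coyoneda) (op a)) ≫
    colimit.desc (d.IXd.op ⋙ coyoneda) d.coconeX).app c h = _
  rw [colimit.ι_desc]
  rfl

lemma descY_el {c : C} (a : (Idx d)ᵒᵖ) (h : d.ℓ.Yd.obj a.unop.t ⟶ c) :
    (d.descY).app c ((d.NY).el a h) = d.Y.hat.map h a.unop.υ := by
  show ((colimit.ι (d.IYd.op ⋙ coyoneda) (op a)) ≫
    colimit.desc (d.IYd.op ⋙ coyoneda) d.coconeY).app c h = _
  rw [colimit.ι_desc]
  rfl

lemma descX_surj (c : C) : Function.Surjective ((d.descX).app c) := by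
  intro x
  obtain ⟨s, h, hs⟩ := d.existsX_el (d.rh.app c x)
  refine ⟨(d.NX).el (op (d.can s)) h, ?_⟩
  erw [d.descX_el]
  show d.X.hat.map h (d.ih.app _ (d.Xp.el s (𝟙 (d.ℓ.Xd.obj s)))) = x
  have h1 : d.Xp.hat.map h (d.Xp.el s (𝟙 (d.ℓ.Xd.obj s))) = d.Xp.el s h :=
    d.Xp.el_map_eq s _ _ (Category.id_comp _)
  have h2 := NatTrans.naturality_apply d.ih h (d.Xp.el s (𝟙 (d.ℓ.Xd.obj s)))
  rw [h1, ← hs] at h2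
  rw [← h2]
  exact types_congr_hom (congrArg (fun σ => NatTrans.app σ c) d.retX) x

lemma descY_surj (c : C) : Function.Surjective ((d.descY).app c) := by
  intro x
  obtain ⟨s, h, hs⟩ := d.existsY_el (d.rh'.app c x)
  refine ⟨(d.NY).el (op (d.can s)) h, ?_⟩
  erw [d.descY_el]
  show d.Y.hat.map h (d.ih'.app _ (d.Yp.el s (𝟙 (d.ℓ.Yd.obj s)))) = x
  have h1 : d.Yp.hat.map h (d.Yp.el s (𝟙 (d.ℓ.Yd.obj s))) = d.Yp.el s h :=
    d.Yp.el_map_eq s _ _ (Category.id_comp _)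
  have h2 := NatTrans.naturality_apply d.ih' h (d.Yp.el s (𝟙 (d.ℓ.Yd.obj s)))
  rw [h1, ← hs] at h2
  rw [← h2]
  exact types_congr_hom (congrArg (fun σ => NatTrans.app σ c) d.retY) x

lemma descX_inj (c : C) : Function.Injective ((d.descX).app c) := by
  intro x y hxy
  obtain ⟨a, h, rfl⟩ := (d.NX).exists_el x
  obtain ⟨a', h', rfl⟩ := (d.NX).exists_el y
  erw [d.descX_el, d.descX_el] at hxy
  obtain ⟨s, m, hmu, -⟩ := d.exists_hom_to_can a.unop
  obtain ⟨s', m', hmu', -⟩ := d.exists_hom_to_can a'.unop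
  have t1 := d.elNX_w (m ≫ d.canHom (IsCofiltered.minToLeft s s')) h
  have t2 := d.elNX_w (m' ≫ d.canHom (IsCofiltered.minToRight s s')) h'
  have hM1 : d.Xp.el (IsCofiltered.min s s')
      ((m ≫ d.canHom (IsCofiltered.minToLeft s s')).u) = d.rh.app _ a.unop.ξ := by
    show d.Xp.el _ (d.ℓ.Xd.map (IsCofiltered.minToLeft s s') ≫ m.u) = _
    rw [← d.elX_w (IsCofiltered.minToLeft s s') m.u]
    exact hmu
  have hM2 : d.Xp.el (IsCofiltered.min s s')
      ((m' ≫ d.canHom (IsCofiltered.minToRight s s')).u) = d.rh.app _ a'.unop.ξ := by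
    show d.Xp.el _ (d.ℓ.Xd.map (IsCofiltered.minToRight s s') ≫ m'.u) = _
    rw [← d.elX_w (IsCofiltered.minToRight s s') m'.u]
    exact hmu'
  have q1 : d.Xp.el (IsCofiltered.min s s')
      ((m ≫ d.canHom (IsCofiltered.minToLeft s s')).u ≫ h)
      = d.rh.app c (d.X.hat.map h a.unop.ξ) := by
    have e1 : d.Xp.hat.map h (d.Xp.el (IsCofiltered.min s s')
        ((m ≫ d.canHom (IsCofiltered.minToLeft s s')).u))
        = d.Xp.el (IsCofiltered.min s s')
          ((m ≫ d.canHom (IsCofiltered.minToLeft s s')).u ≫ h) :=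
      d.Xp.el_map_eq _ _ _ rfl
    erw [← e1, hM1]
    exact (NatTrans.naturality_apply d.rh h a.unop.ξ).symm
  have q2 : d.Xp.el (IsCofiltered.min s s')
      ((m' ≫ d.canHom (IsCofiltered.minToRight s s')).u ≫ h')
      = d.rh.app c (d.X.hat.map h' a'.unop.ξ) := by
    have e1 : d.Xp.hat.map h' (d.Xp.el (IsCofiltered.min s s')
        ((m' ≫ d.canHom (IsCofiltered.minToRight s s')).u))
        = d.Xp.el (IsCofiltered.min s s')
          ((m' ≫ d.canHom (IsCofiltered.minToRight s s')).u ≫ h') :=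
      d.Xp.el_map_eq _ _ _ rfl
    erw [← e1, hM2]
    exact (NatTrans.naturality_apply d.rh h' a'.unop.ξ).symm
  have hel : d.Xp.el (IsCofiltered.min s s')
      ((m ≫ d.canHom (IsCofiltered.minToLeft s s')).u ≫ h)
      = d.Xp.el (IsCofiltered.min s s')
        ((m' ≫ d.canHom (IsCofiltered.minToRight s s')).u ≫ h') := by
    rw [q1, q2]
    exact congrArg (fun z => d.rh.app c z) hxy
  obtain ⟨s₈, dd, hdd⟩ := d.elX_eq_same hel
  have t3 := d.elNX_w (b := op (d.can (IsCofiltered.min s s'))) (d.canHom dd)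
    ((m ≫ d.canHom (IsCofiltered.minToLeft s s')).u ≫ h)
  have t4 := d.elNX_w (b := op (d.can (IsCofiltered.min s s'))) (d.canHom dd)
    ((m' ≫ d.canHom (IsCofiltered.minToRight s s')).u ≫ h')
  erw [t1, t3, t2, t4]
  exact congrArg (fun q => (d.NX).el (op (d.can s₈)) q) hdd

lemma descY_inj (c : C) : Function.Injective ((d.descY).app c) := by
  intro x y hxy
  obtain ⟨a, h, rfl⟩ := (d.NY).exists_el x
  obtain ⟨a', h', rfl⟩ := (d.NY).exists_el y
  erw [d.descY_el, d.descY_el] at hxy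
  obtain ⟨s, m, -, hmw⟩ := d.exists_hom_to_can a.unop
  obtain ⟨s', m', -, hmw'⟩ := d.exists_hom_to_can a'.unop
  have t1 := d.elNY_w (m ≫ d.canHom (IsCofiltered.minToLeft s s')) h
  have t2 := d.elNY_w (m' ≫ d.canHom (IsCofiltered.minToRight s s')) h'
  have hM1 : d.Yp.el (IsCofiltered.min s s')
      ((m ≫ d.canHom (IsCofiltered.minToLeft s s')).w) = d.rh'.app _ a.unop.υ := by
    show d.Yp.el _ (d.ℓ.Yd.map (IsCofiltered.minToLeft s s') ≫ m.w) = _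
    rw [← d.elY_w (IsCofiltered.minToLeft s s') m.w]
    exact hmw
  have hM2 : d.Yp.el (IsCofiltered.min s s')
      ((m' ≫ d.canHom (IsCofiltered.minToRight s s')).w) = d.rh'.app _ a'.unop.υ := by
    show d.Yp.el _ (d.ℓ.Yd.map (IsCofiltered.minToRight s s') ≫ m'.w) = _
    rw [← d.elY_w (IsCofiltered.minToRight s s') m'.w]
    exact hmw'
  have q1 : d.Yp.el (IsCofiltered.min s s')
      ((m ≫ d.canHom (IsCofiltered.minToLeft s s')).w ≫ h)
      = d.rh'.app c (d.Y.hat.map h a.unop.υ) := by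
    have e1 : d.Yp.hat.map h (d.Yp.el (IsCofiltered.min s s')
        ((m ≫ d.canHom (IsCofiltered.minToLeft s s')).w))
        = d.Yp.el (IsCofiltered.min s s')
          ((m ≫ d.canHom (IsCofiltered.minToLeft s s')).w ≫ h) :=
      d.Yp.el_map_eq _ _ _ rfl
    erw [← e1, hM1]
    exact (NatTrans.naturality_apply d.rh' h a.unop.υ).symm
  have q2 : d.Yp.el (IsCofiltered.min s s')
      ((m' ≫ d.canHom (IsCofiltered.minToRight s s')).w ≫ h')
      = d.rh'.app c (d.Y.hat.map h' a'.unop.υ) := by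
    have e1 : d.Yp.hat.map h' (d.Yp.el (IsCofiltered.min s s')
        ((m' ≫ d.canHom (IsCofiltered.minToRight s s')).w))
        = d.Yp.el (IsCofiltered.min s s')
          ((m' ≫ d.canHom (IsCofiltered.minToRight s s')).w ≫ h') :=
      d.Yp.el_map_eq _ _ _ rfl
    erw [← e1, hM2]
    exact (NatTrans.naturality_apply d.rh' h' a'.unop.υ).symm
  have hel : d.Yp.el (IsCofiltered.min s s')
      ((m ≫ d.canHom (IsCofiltered.minToLeft s s')).w ≫ h)
      = d.Yp.el (IsCofiltered.min s s')
        ((m' ≫ d.canHom (IsCofiltered.minToRight s s')).w ≫ h') := by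
    rw [q1, q2]
    exact congrArg (fun z => d.rh'.app c z) hxy
  obtain ⟨s₈, dd, hdd⟩ := d.elY_eq_same hel
  have t3 := d.elNY_w (b := op (d.can (IsCofiltered.min s s'))) (d.canHom dd)
    ((m ≫ d.canHom (IsCofiltered.minToLeft s s')).w ≫ h)
  have t4 := d.elNY_w (b := op (d.can (IsCofiltered.min s s'))) (d.canHom dd)
    ((m' ≫ d.canHom (IsCofiltered.minToRight s s')).w ≫ h')
  erw [t1, t3, t2, t4]
  exact congrArg (fun q => (d.NY).el (op (d.can s₈)) q) hdd

lemma square : toHat (d.newLevel).hom ≫ d.descX = d.descY ≫ d.fh := by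
  apply colimit.hom_ext
  intro j
  apply NatTrans.ext
  funext c
  refine ConcreteCategory.hom_ext _ _ fun h => ?_
  show (d.descX).app c ((toHat (d.newLevel).hom).app c ((d.NY).el j.unop h))
      = d.fh.app c ((d.descY).app c ((d.NY).el j.unop h))
  have e1 : (toHat (d.newLevel).hom).app c ((d.NY).el j.unop h)
      = (d.NX).el j.unop (d.Iη.app j.unop ≫ h) := toHat_levelHom_el d.Iη j.unop h
  erw [e1, d.descX_el, d.descY_el]
  calc d.X.hat.map (d.Iη.app j.unop ≫ h) j.unop.unop.ξ
      = d.X.hat.map h (d.X.hat.map (d.ℓ.η.app j.unop.unop.t) j.unop.unop.ξ) :=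
        FunctorToTypes.map_comp_apply _ _ _ _
    _ = d.X.hat.map h (d.fh.app _ j.unop.unop.υ) :=
        congrArg (fun z => d.X.hat.map h z) j.unop.unop.compat.symm
    _ = d.fh.app c (d.Y.hat.map h j.unop.unop.υ) :=
        (NatTrans.naturality_apply d.fh h j.unop.unop.υ).symm

/-- Main lemma: retract data over a level map with components in `M` yields an
essentially levelwise `M`-presentation of the retract. -/
lemma essLevelwise_self {M : MorphismProperty C} (hM : ∀ t, M (d.ℓ.η.app t)) :
    essLevelwise M d.f := by
  haveI hX : IsIso d.descX := by
    have : ∀ c, IsIso ((d.descX).app c) := fun c =>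
      (isIso_iff_bijective _).2 ⟨d.descX_inj c, d.descX_surj c⟩
    exact NatIso.isIso_of_isIso_app _
  haveI hY : IsIso d.descY := by
    have : ∀ c, IsIso ((d.descY).app c) := fun c =>
      (isIso_iff_bijective _).2 ⟨d.descY_inj c, d.descY_surj c⟩
    exact NatIso.isIso_of_isIso_app _
  refine ⟨d.newLevel, fun a => hM a.unop.t, ⟨?_⟩⟩
  refine Arrow.isoMk (isoOfHat (asIso d.descX : d.NX.hat ≅ d.X.hat))
    (isoOfHat (asIso d.descY : d.NY.hat ≅ d.Y.hat)) ?_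
  apply toHat_inj
  rw [toHat_comp, toHat_comp]
  show toHat (d.newLevel).hom ≫ d.descX = d.descY ≫ d.fh
  exact d.square

end RD

/-- Being a retract transfers along isomorphisms of arrows. -/
lemma isRetractHom_of_arrowIso {D : Type*} [Category D] {X Y X' Y' X'' Y'' : D}
    {f : X ⟶ Y} {g : X' ⟶ Y'} {g' : X'' ⟶ Y''} (hr : IsRetractHom f g)
    (σ : Arrow.mk g ≅ Arrow.mk g') : IsRetractHom f g' := by
  obtain ⟨i, r, i', r', h1, h2, h3, h4⟩ := hr
  have hl : σ.hom.left ≫ σ.inv.left = 𝟙 _ := by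
    rw [← Arrow.comp_left, σ.hom_inv_id]; rfl
  have hr2 : σ.hom.right ≫ σ.inv.right = 𝟙 _ := by
    rw [← Arrow.comp_right, σ.hom_inv_id]; rfl
  have w1 := Arrow.w σ.hom
  have w2 := Arrow.w σ.inv
  simp only [Arrow.mk_hom] at w1 w2
  refine ⟨i ≫ σ.hom.left, σ.inv.left ≫ r, i' ≫ σ.hom.right, σ.inv.right ≫ r', ?_, ?_, ?_, ?_⟩
  · rw [Category.assoc, ← Category.assoc σ.hom.left, hl, Category.id_comp, h1]
  · rw [Category.assoc, ← Category.assoc σ.hom.right, hr2, Category.id_comp, h2]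
  · rw [Category.assoc, w1, ← Category.assoc, h3, Category.assoc]
  · rw [Category.assoc, h4, ← Category.assoc, w2, Category.assoc]

/-- A retract of an essentially levelwise `M`-map is an essentially levelwise `M`-map. -/
lemma essLevelwise_of_isRetractHom {M : MorphismProperty C} {X Y X' Y' : ProObj C}
    {f : X ⟶ Y} {g : X' ⟶ Y'} (hr : IsRetractHom f g) (hg : essLevelwise M g) :
    essLevelwise M f := by
  obtain ⟨ℓ, hM, ⟨σ⟩⟩ := hg
  obtain ⟨i, r, i', r', h1, h2, h3, h4⟩ := isRetractHom_of_arrowIso hr σ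
  exact RD.essLevelwise_self ⟨ℓ, X, Y, f, i, r, i', r', h1, h2, h3, h4⟩ hM

end RetractMain



/-- Corollary 5.6 of the paper. The classes of cofibrations
and of weak equivalences in `pro-𝒞` are closed under retracts. -/
theorem statement_8 {𝒞 : Type u} [Category.{v} 𝒞] [HasLimits 𝒞] [HasColimits 𝒞]
    {A : Type*} [Preorder A] [IsDirected A (· ≤ ·)]
    (Cof W Fib : A → MorphismProperty 𝒞) (h : IsFilteredMS Cof W Fib)
    {X Y X' Y' : ProObj 𝒞} (f : X ⟶ Y) (g : X' ⟶ Y') (hr : IsRetractHom f g) :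
    (proCof Cof g → proCof Cof f) ∧ (proWeq W g → proWeq W f) := by
  constructor
  · intro hg a
    exact essLevelwise_of_isRetractHom hr (hg a)
  · intro hg a
    exact essLevelwise_of_isRetractHom hr (hg a)

end ProPaper
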